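/- arXiv:2304.14760 — 2 statements merged into one kernel-verified Lean document; each statement's English description precedes it below -/
import Mathlib

section
/- General sufficient reasons are exactly the variable-minimal prime implicants of the general reason: for an instance I in class Δ, a term τ is a general sufficient reason for the decision on I if and only if τ is a prime implicant of ⊓I·Δ that is variable-minimal among the prime implicants of ⊓I·Δ. -/
open scoped Classical

/-- Formulas over finite-domain variables: each variable `X : V` has domain `D X`.
A literal of `X` is (intended to be) a nonempty proper subset of `D X`'s states. -/
inductive Form (V : Type) (D : V → Type) : Type where
  | top : Form V D
  | bot : Form V D
  | lit : (X : V) → Set (D X) → Form V D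
  | neg : Form V D → Form V D
  | and : Form V D → Form V D → Form V D
  | or : Form V D → Form V D → Form V D

namespace Form

variable {V : Type} {D : V → Type}

/-- Satisfaction of a formula by a world. -/
def sat (w : ∀ X, D X) : Form V D → Prop
  | top => True
  | bot => False
  | lit X s => w X ∈ s
  | neg φ => ¬ sat w φ
  | and φ ψ => sat w φ ∧ sat w ψ
  | or φ ψ => sat w φ ∨ sat w ψ

/-- Conditioning `Δ|x` of a formula on state `x` of variable `X`: each `X`-literal
`ℓ` is replaced by `⊤` if `x ∈ ℓ` and by `⊥` otherwise. -/
noncomputable def cond (X : V) (x : D X) : Form V D → Form V D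
  | top => top
  | bot => bot
  | lit Y s => if h : X = Y then (if h ▸ x ∈ s then top else bot) else lit Y s
  | neg φ => neg (cond X x φ)
  | and φ ψ => and (cond X x φ) (cond X x ψ)
  | or φ ψ => or (cond X x φ) (cond X x ψ)

/-- The selection operator `⊓x·Δ := (Δ|x) ∧ Δ`. -/
noncomputable def sel (X : V) (x : D X) (Δ : Form V D) : Form V D :=
  and (cond X x Δ) Δ

/-- Logical equivalence of formulas (same models). -/
def equiv (φ ψ : Form V D) : Prop := ∀ w, sat w φ ↔ sat w ψ

/-- Variable `X` occurs (appears) in the formula. -/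
def occurs (X : V) : Form V D → Prop
  | top => False
  | bot => False
  | lit Y _ => Y = X
  | neg φ => occurs X φ
  | and φ ψ => occurs X φ ∨ occurs X ψ
  | or φ ψ => occurs X φ ∨ occurs X ψ

/-- NNF: negation-free, and every literal is a nonempty proper subset of states. -/
def isNNF : Form V D → Prop
  | top => True
  | bot => True
  | lit _ s => s.Nonempty ∧ s ≠ Set.univ
  | neg _ => False
  | and φ ψ => isNNF φ ∧ isNNF ψ
  | or φ ψ => isNNF φ ∧ isNNF ψ

/-- The `X`-literal `s` occurs in the formula. -/
def litOccurs (X : V) (s : Set (D X)) : Form V D → Prop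
  | top => False
  | bot => False
  | lit Y t => ∃ h : Y = X, h ▸ t = s
  | neg φ => litOccurs X s φ
  | and φ ψ => litOccurs X s φ ∨ litOccurs X s ψ
  | or φ ψ => litOccurs X s φ ∨ litOccurs X s ψ

/-- Every literal in the formula is implied by the instance `I`
(i.e., contains `I`'s state of its variable). -/
def litsImp (I : ∀ X, D X) : Form V D → Prop
  | top => True
  | bot => True
  | lit X s => I X ∈ s
  | neg φ => litsImp I φ
  | and φ ψ => litsImp I φ ∧ litsImp I ψ
  | or φ ψ => litsImp I φ ∧ litsImp I ψ

/-- Iterated selection `⊓` over a list of variables, using states from `v`. -/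
noncomputable def selList (v : ∀ X, D X) : List V → Form V D → Form V D
  | [], Δ => Δ
  | X :: L, Δ => sel X (v X) (selList v L Δ)

/-- The general reason `⊓I·Δ`: selection applied for all states of instance `I`. -/
noncomputable def selAll [Fintype V] (I : ∀ X, D X) (Δ : Form V D) : Form V D :=
  selList I (Finset.univ : Finset V).toList Δ

noncomputable def listAnd : List (Form V D) → Form V D
  | [] => top
  | φ :: L => and φ (listAnd L)

/-- Universal literal quantification `∀x·Δ := (Δ|x) ∧ ⋀_{y ≠ x} (x ∨ Δ|y)`. -/
noncomputable def uq (X : V) [Fintype (D X)] (x : D X) (Δ : Form V D) : Form V D :=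
  letI : DecidableEq (D X) := fun _ _ => Classical.propDecidable _
  and (cond X x Δ)
    (listAnd ((((Finset.univ : Finset (D X)).erase x).toList).map
      (fun y => or (lit X ({x} : Set (D X))) (cond X y Δ))))

/-- Iterated universal literal quantification over a list of variables. -/
noncomputable def uqList [∀ X, Fintype (D X)] (v : ∀ X, D X) : List V → Form V D → Form V D
  | [], Δ => Δ
  | X :: L, Δ => uq X (v X) (uqList v L Δ)

/-- The complete reason `∀I·Δ`. -/
noncomputable def uqAll [Fintype V] [∀ X, Fintype (D X)] (I : ∀ X, D X) (Δ : Form V D) :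
    Form V D :=
  uqList I (Finset.univ : Finset V).toList Δ

end Form

/-- A term: a conjunction of literals over distinct variables. Variable `X` is
mentioned iff `lits X ≠ univ`; each literal is nonempty (terms are consistent). -/
structure MvTerm (V : Type) (D : V → Type) : Type where
  lits : ∀ X, Set (D X)
  nonempty : ∀ X, (lits X).Nonempty

/-- A clause: a disjunction of literals over distinct variables. Variable `X` is
mentioned iff `lits X ≠ ∅`; each literal is proper (clauses are never valid). -/
structure MvClause (V : Type) (D : V → Type) : Type where
  lits : ∀ X, Set (D X)
  proper : ∀ X, lits X ≠ Set.univ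

namespace MvTerm

variable {V : Type} {D : V → Type}

def tsat (w : ∀ X, D X) (τ : MvTerm V D) : Prop := ∀ X, w X ∈ τ.lits X

def vars (τ : MvTerm V D) : Set V := {X | τ.lits X ≠ Set.univ}

/-- A simple term assigns a single state to each of its variables. -/
def simple (τ : MvTerm V D) : Prop :=
  ∀ X, τ.lits X ≠ Set.univ → ∃ x, τ.lits X = ({x} : Set (D X))

end MvTerm

namespace MvClause

variable {V : Type} {D : V → Type}

def csat (w : ∀ X, D X) (σ : MvClause V D) : Prop := ∃ X, w X ∈ σ.lits X

def vars (σ : MvClause V D) : Set V := {X | σ.lits X ≠ (∅ : Set (D X))}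

/-- A simple clause: all its literals are single states. -/
def simple (σ : MvClause V D) : Prop :=
  ∀ X, σ.lits X ≠ (∅ : Set (D X)) → ∃ x, σ.lits X = ({x} : Set (D X))

end MvClause

section PrimeDefs

variable {V : Type} {D : V → Type}

def termImp (τ τ' : MvTerm V D) : Prop := ∀ w, τ.tsat w → τ'.tsat w

def clauseImp (σ σ' : MvClause V D) : Prop := ∀ w, σ.csat w → σ'.csat w

/-- A prime implicant of the set of worlds `M`: a ⊨-maximal term implying `M`. -/
def isPrimeImplicantOf (M : (∀ X, D X) → Prop) (τ : MvTerm V D) : Prop :=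
  (∀ w, τ.tsat w → M w) ∧
  ∀ τ' : MvTerm V D, (∀ w, τ'.tsat w → M w) → termImp τ τ' → τ' = τ

/-- A prime implicate of the set of worlds `M`: a ⊨-minimal clause implied by `M`. -/
def isPrimeImplicateOf (M : (∀ X, D X) → Prop) (σ : MvClause V D) : Prop :=
  (∀ w, M w → σ.csat w) ∧
  ∀ σ' : MvClause V D, (∀ w, M w → σ'.csat w) → clauseImp σ' σ → σ' = σ

/-- Remove subsumed terms: delete any term strictly implied by another in the set. -/
def removeSubsumedT (S : Set (MvTerm V D)) : Set (MvTerm V D) :=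
  {τ ∈ S | ¬ ∃ τ' ∈ S, τ' ≠ τ ∧ termImp τ τ'}

/-- Remove subsumed clauses: delete any clause strictly implying another in the set. -/
def removeSubsumedC (S : Set (MvClause V D)) : Set (MvClause V D) :=
  {σ ∈ S | ¬ ∃ σ' ∈ S, σ' ≠ σ ∧ clauseImp σ' σ}

end PrimeDefs

section Reasons

variable {V : Type} {D : V → Type}

/-- Instance `I` implies (satisfies) term `τ`. -/
def instEntailsT (I : ∀ X, D X) (τ : MvTerm V D) : Prop := MvTerm.tsat I τ

/-- Term `τ` implies formula `Δ`. -/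
def termImpF (τ : MvTerm V D) (Δ : Form V D) : Prop :=
  ∀ w, MvTerm.tsat w τ → Form.sat w Δ

/-- `τ` is a weakest term with `I ⊨ τ ⊨ Δ`. -/
def weakestTermFor (I : ∀ X, D X) (Δ : Form V D) (τ : MvTerm V D) : Prop :=
  instEntailsT I τ ∧ termImpF τ Δ ∧
  ∀ τ' : MvTerm V D, instEntailsT I τ' → termImpF τ' Δ → termImp τ τ' → τ' = τ

/-- A sufficient reason: a weakest simple term `τ` with `I ⊨ τ ⊨ Δ`. -/
def isSR (I : ∀ X, D X) (Δ : Form V D) (τ : MvTerm V D) : Prop :=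
  MvTerm.simple τ ∧ instEntailsT I τ ∧ termImpF τ Δ ∧
  ∀ τ' : MvTerm V D, MvTerm.simple τ' → instEntailsT I τ' → termImpF τ' Δ →
    termImp τ τ' → τ' = τ

/-- A general sufficient reason: a weakest term with `I ⊨ τ ⊨ Δ` that is
variable-minimal among such weakest terms. -/
def isGSR (I : ∀ X, D X) (Δ : Form V D) (τ : MvTerm V D) : Prop :=
  weakestTermFor I Δ τ ∧
  ¬ ∃ τ' : MvTerm V D, weakestTermFor I Δ τ' ∧ MvTerm.vars τ' ⊂ MvTerm.vars τ

/-- `I ⊓ τ'`: the smallest subterm of `I` that implies `τ'` (the conjunction of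
`I`'s states on the variables mentioned by `τ'`), for `I ⊨ τ'`. -/
noncomputable def projTerm (I : ∀ X, D X) (τ' : MvTerm V D) : MvTerm V D where
  lits := fun X =>
    if τ'.lits X = Set.univ then Set.univ else ({I X} : Set (D X))
  nonempty := by
    intro X
    try dsimp only
    split
    · exact ⟨I X, Set.mem_univ _⟩
    · exact ⟨I X, rfl⟩

/-!
A world `w` satisfies `⊓I·Δ` iff every world obtained from `w` by moving some of its states to
those of `I` satisfies `Δ`. Hence a term implying `Δ` and satisfied by `I` implies `⊓I·Δ`, and
conversely adding `I`'s state to every literal of an implicant of `⊓I·Δ` keeps it an implicant.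
So every prime implicant of `⊓I·Δ` is satisfied by `I`, and the prime implicants of `⊓I·Δ` are
exactly the weakest terms `τ` with `I ⊨ τ ⊨ Δ`; variable-minimality is then the same condition
on both sides.
-/

namespace Form

variable {V : Type} {D : V → Type}

theorem sat_cond (X : V) (x : D X) (Δ : Form V D) (w : ∀ Y, D Y) :
    sat w (cond X x Δ) ↔ sat (Function.update w X x) Δ := by
  induction Δ with
  | top | bot => simp [cond, sat]
  | lit Y s =>
    by_cases h : X = Y
    · subst h
      by_cases hx : x ∈ s <;> simp [cond, sat, hx]
    · simp [cond, sat, h, Function.update_of_ne (Ne.symm h)]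
  | neg φ ih => simp [cond, sat, ih]
  | and φ ψ ih₁ ih₂ | or φ ψ ih₁ ih₂ => simp [cond, sat, ih₁, ih₂]

theorem sat_selList (v : ∀ X, D X) (L : List V) (Δ : Form V D) (w : ∀ X, D X) :
    sat w (selList v L Δ) ↔
      ∀ w' : ∀ X, D X, (∀ X, w' X = w X ∨ (X ∈ L ∧ w' X = v X)) → sat w' Δ := by
  induction L generalizing w with
  | nil =>
    simp only [selList, List.not_mem_nil, false_and, or_false]
    exact ⟨fun h w' hw' => funext hw' ▸ h, fun h => h w fun _ => rfl⟩
  | cons X L ih =>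
    simp only [selList, sel, sat, sat_cond, ih, List.mem_cons]
    constructor
    · rintro ⟨hmoved, hkept⟩ w' hw'
      rcases hw' X with hX | ⟨-, hX⟩
      · refine hkept w' fun Y => ?_
        by_cases hYX : Y = X
        · exact .inl (hYX ▸ hX)
        · exact (hw' Y).imp_right fun ⟨hY, h⟩ => ⟨hY.resolve_left hYX, h⟩
      · refine hmoved w' fun Y => ?_
        by_cases hYX : Y = X
        · subst hYX
          exact .inl (by simp [hX])
        · rw [Function.update_of_ne hYX]
          exact (hw' Y).imp_right fun ⟨hY, h⟩ => ⟨hY.resolve_left hYX, h⟩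
    · intro h
      refine ⟨fun w' hw' => h w' fun Y => ?_, fun w' hw' => h w' fun Y => ?_⟩
      · by_cases hYX : Y = X
        · subst hYX
          rcases hw' Y with h | ⟨-, h⟩ <;> simp_all
        · simpa [Function.update_of_ne hYX, hYX] using hw' Y
      · exact (hw' Y).imp_right fun ⟨hY, h⟩ => ⟨.inr hY, h⟩

theorem sat_selAll [Fintype V] (I : ∀ X, D X) (Δ : Form V D) (w : ∀ X, D X) :
    sat w (selAll I Δ) ↔
      ∀ w' : ∀ X, D X, (∀ X, w' X = w X ∨ w' X = I X) → sat w' Δ := by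
  simp [selAll, sat_selList]

theorem sat_of_sat_selAll [Fintype V] {I w : ∀ X, D X} {Δ : Form V D}
    (h : sat w (selAll I Δ)) : sat w Δ :=
  (sat_selAll I Δ w).1 h w fun _ => .inl rfl

end Form

namespace MvTerm

variable {V : Type} {D : V → Type}

theorem ext {τ τ' : MvTerm V D} (h : τ.lits = τ'.lits) : τ = τ' := by
  cases τ; cases τ'; cases h; rfl

theorem lits_subset_of_termImp {τ τ' : MvTerm V D} (h : termImp τ τ') (X : V) :
    τ.lits X ⊆ τ'.lits X := by
  intro x hx
  have hw : τ.tsat (Function.update (fun Y => (τ.nonempty Y).some) X x) := by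
    intro Y
    by_cases hYX : Y = X
    · subst hYX
      simpa using hx
    · simpa [Function.update_of_ne hYX] using (τ.nonempty Y).some_mem
  simpa using h _ hw X

theorem termImp_antisymm {τ τ' : MvTerm V D} (h : termImp τ τ') (h' : termImp τ' τ) :
    τ = τ' :=
  ext <| funext fun X => (lits_subset_of_termImp h X).antisymm (lits_subset_of_termImp h' X)

def widen (I : ∀ X, D X) (τ : MvTerm V D) : MvTerm V D where
  lits X := insert (I X) (τ.lits X)
  nonempty _ := Set.insert_nonempty _ _

theorem tsat_widen (I : ∀ X, D X) (τ : MvTerm V D) : (τ.widen I).tsat I :=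
  fun _ => Set.mem_insert _ _

theorem termImp_widen (I : ∀ X, D X) (τ : MvTerm V D) : termImp τ (τ.widen I) :=
  fun _ hw X => Set.mem_insert_of_mem _ (hw X)

theorem tsat_of_forall_eq_or_eq {τ : MvTerm V D} {I w w' : ∀ X, D X} (hI : τ.tsat I)
    (hw : τ.tsat w) (hw' : ∀ X, w' X = w X ∨ w' X = I X) : τ.tsat w' := fun X => by
  rcases hw' X with h | h <;> rw [h]
  exacts [hw X, hI X]

end MvTerm

section GeneralReason

variable {V : Type} {D : V → Type} [Fintype V] {I : ∀ X, D X} {Δ : Form V D} {τ : MvTerm V D}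

theorem termImpF_selAll_of_termImpF (hI : τ.tsat I) (hΔ : termImpF τ Δ) :
    termImpF τ (Form.selAll I Δ) := fun w hw =>
  (Form.sat_selAll I Δ w).2 fun _ hw' => hΔ _ (MvTerm.tsat_of_forall_eq_or_eq hI hw hw')

theorem termImpF_of_termImpF_selAll (h : termImpF τ (Form.selAll I Δ)) : termImpF τ Δ :=
  fun w hw => Form.sat_of_sat_selAll (h w hw)

-- A model of `τ.widen I` is a model of `τ` with some states moved to those of `I`,
-- and the models of `⊓I·Δ` are closed under such moves.
theorem termImpF_selAll_widen (h : termImpF τ (Form.selAll I Δ)) :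
    termImpF (τ.widen I) (Form.selAll I Δ) := by
  intro w hw
  let u : ∀ X, D X := fun X => if w X ∈ τ.lits X then w X else (τ.nonempty X).some
  have hu : τ.tsat u := fun X => by
    by_cases hX : w X ∈ τ.lits X
    · simp [u, hX]
    · simpa [u, hX] using (τ.nonempty X).some_mem
  refine (Form.sat_selAll I Δ w).2 fun w' hw' => (Form.sat_selAll I Δ u).1 (h u hu) w' fun X => ?_
  by_cases hX : w X ∈ τ.lits X
  · simpa [u, hX] using hw' X
  · have hwI : w X = I X := (Set.mem_insert_iff.1 (hw X)).resolve_right hX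
    exact .inr ((hw' X).elim (· ▸ hwI) id)

theorem weakestTermFor_iff_isPrimeImplicantOf :
    weakestTermFor I Δ τ ↔ isPrimeImplicantOf (fun w => Form.sat w (Form.selAll I Δ)) τ := by
  constructor
  · rintro ⟨hI, hΔ, hweakest⟩
    refine ⟨termImpF_selAll_of_termImpF hI hΔ, fun τ' hτ' himp => ?_⟩
    have hwiden : τ'.widen I = τ :=
      hweakest _ (τ'.tsat_widen I) (termImpF_of_termImpF_selAll (termImpF_selAll_widen hτ'))
        fun w hw => τ'.termImp_widen I w (himp w hw)
    exact MvTerm.termImp_antisymm (hwiden ▸ τ'.termImp_widen I) himp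
  · rintro ⟨hτ, hprime⟩
    have hwiden : τ.widen I = τ := hprime _ (termImpF_selAll_widen hτ) (τ.termImp_widen I)
    refine ⟨hwiden ▸ τ.tsat_widen I, termImpF_of_termImpF_selAll hτ, fun τ' hI hΔ himp => ?_⟩
    exact hprime τ' (termImpF_selAll_of_termImpF hI hΔ) himp

end GeneralReason

theorem gsr_iff_var_minimal_prime_implicant_general {V : Type} {D : V → Type}
    [Fintype V] (Δ : Form V D) (I : ∀ X, D X)
    (τ : MvTerm V D) :
    isGSR I Δ τ ↔
      (isPrimeImplicantOf (fun w => Form.sat w (Form.selAll I Δ)) τ ∧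
        ¬ ∃ τ' : MvTerm V D,
          isPrimeImplicantOf (fun w => Form.sat w (Form.selAll I Δ)) τ' ∧
          MvTerm.vars τ' ⊂ MvTerm.vars τ) := by
  simp only [isGSR, weakestTermFor_iff_isPrimeImplicantOf]

/-- the general sufficient reasons for the decision on instance `I`
in class `Δ` are exactly the variable-minimal prime implicants of the general
reason `⊓I·Δ`. -/
theorem gsr_iff_var_minimal_prime_implicant {V : Type} {D : V → Type}
    [Fintype V] (Δ : Form V D) (I : ∀ X, D X) (hI : Form.sat I Δ)
    (τ : MvTerm V D) :
    isGSR I Δ τ ↔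
      (isPrimeImplicantOf (fun w => Form.sat w (Form.selAll I Δ)) τ ∧
        ¬ ∃ τ' : MvTerm V D,
          isPrimeImplicantOf (fun w => Form.sat w (Form.selAll I Δ)) τ' ∧
          MvTerm.vars τ' ⊂ MvTerm.vars τ) :=
  gsr_iff_var_minimal_prime_implicant_general Δ I τ
end Reasons
end

section
/- Incremental variable-minimality pruning under resolution: let S be a set of clauses (a CNF) over finite-domain variables that is locally fixated on some instance I, and let σ, σ' ∈ S with vars(σ') ⊊ vars(σ). Then the variable-minimal prime implicates of S are exactly the variable-minimal prime implicates of S ∖ {σ}. -/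
open scoped Classical

section Stmt19

variable {V : Type} {D : V → Type}

/-- Satisfaction of a CNF (set of clauses). -/
def cnfSat (S : Set (MvClause V D)) (w : ∀ X, D X) : Prop :=
  ∀ c ∈ S, MvClause.csat w c

/-- A set of clauses is locally fixated on instance `I`: every literal occurring
in it contains `I`'s state of its variable. -/
def locallyFixated (I : ∀ X, D X) (S : Set (MvClause V D)) : Prop :=
  ∀ c ∈ S, ∀ X, c.lits X ≠ (∅ : Set (D X)) → I X ∈ c.lits X

/-- A variable-minimal prime implicate of a CNF `S`. -/
def varMinPrimeImplicate (S : Set (MvClause V D)) (c : MvClause V D) : Prop :=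
  isPrimeImplicateOf (cnfSat S) c ∧
  ¬ ∃ c' : MvClause V D,
      isPrimeImplicateOf (cnfSat S) c' ∧ MvClause.vars c' ⊂ MvClause.vars c

end Stmt19

section Helpers

variable {V : Type} {D : V → Type}

theorem MvClause.ext' {c d : MvClause V D} (h : c.lits = d.lits) : c = d := by
  cases c; cases d; simp_all

theorem clauseImp_pointwise {c d : MvClause V D} (h : clauseImp c d) :
    ∀ X, c.lits X ⊆ d.lits X := by
  intro X x hx
  by_contra hxd
  set w : ∀ Y, D Y := fun Y =>
    if hY : X = Y then hY ▸ x
    else Classical.choose (Set.ne_univ_iff_exists_notMem _ |>.mp (d.proper Y)) with hwdef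
  have hwX : w X = x := by simp [hwdef]
  have hc : c.csat w := ⟨X, by rw [hwX]; exact hx⟩
  obtain ⟨Y, hY⟩ := h w hc
  by_cases hXY : X = Y
  · subst hXY; rw [hwX] at hY; exact hxd hY
  · have : w Y = Classical.choose
        (Set.ne_univ_iff_exists_notMem _ |>.mp (d.proper Y)) := by simp [hwdef, hXY]
    rw [this] at hY
    exact Classical.choose_spec (Set.ne_univ_iff_exists_notMem _ |>.mp (d.proper Y)) hY

theorem pointwise_clauseImp {c d : MvClause V D} (h : ∀ X, c.lits X ⊆ d.lits X) :
    clauseImp c d := fun w ⟨X, hX⟩ => ⟨X, h X hX⟩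

theorem vars_mono {c d : MvClause V D} (h : ∀ X, c.lits X ⊆ d.lits X) :
    MvClause.vars c ⊆ MvClause.vars d := by
  intro X hX
  simp only [MvClause.vars, Set.mem_setOf_eq] at *
  intro hd
  exact hX (Set.subset_eq_empty (hd ▸ h X) rfl)

theorem exists_prime_below [Fintype V] [∀ X, Fintype (D X)]
    (M : (∀ X, D X) → Prop) :
    ∀ d : MvClause V D, (∀ w, M w → d.csat w) →
      ∃ c : MvClause V D, isPrimeImplicateOf M c ∧ ∀ X, c.lits X ⊆ d.lits X := by
  set N : MvClause V D → ℕ := fun c => ∑ X : V, (c.lits X).ncard with hN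
  have key : ∀ c e : MvClause V D, (∀ X, c.lits X ⊆ e.lits X) → c ≠ e → N c < N e := by
    intro c e hsub hne
    have : ∃ X, c.lits X ≠ e.lits X := by
      by_contra h
      push_neg at h
      exact hne (MvClause.ext' (funext h))
    obtain ⟨X0, hX0⟩ := this
    refine Finset.sum_lt_sum (fun i _ => Set.ncard_le_ncard (hsub i) (Set.toFinite _))
      ⟨X0, Finset.mem_univ _, ?_⟩
    exact Set.ncard_lt_ncard (ssubset_of_subset_of_ne (hsub X0) hX0) (Set.toFinite _)
  have H : ∀ n (d : MvClause V D), N d ≤ n → (∀ w, M w → d.csat w) →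
      ∃ c : MvClause V D, isPrimeImplicateOf M c ∧ ∀ X, c.lits X ⊆ d.lits X := by
    intro n
    induction n with
    | zero =>
      intro d hle hd
      by_cases hp : ∀ σ0 : MvClause V D, (∀ w, M w → σ0.csat w) → clauseImp σ0 d → σ0 = d
      · exact ⟨d, ⟨hd, hp⟩, fun X => subset_rfl⟩
      · push_neg at hp
        obtain ⟨σ0, hσ0, himp, hne⟩ := hp
        exact absurd (Nat.lt_of_lt_of_le (key σ0 d (clauseImp_pointwise himp) hne) hle)
          (Nat.not_lt_zero _)
    | succ n ih =>
      intro d hle hd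
      by_cases hp : ∀ σ0 : MvClause V D, (∀ w, M w → σ0.csat w) → clauseImp σ0 d → σ0 = d
      · exact ⟨d, ⟨hd, hp⟩, fun X => subset_rfl⟩
      · push_neg at hp
        obtain ⟨σ0, hσ0, himp, hne⟩ := hp
        have hlt := key σ0 d (clauseImp_pointwise himp) hne
        obtain ⟨c, hc, hsub⟩ := ih σ0 (Nat.le_of_lt_succ (Nat.lt_of_lt_of_le hlt hle)) hσ0
        exact ⟨c, hc, fun X => (hsub X).trans (clauseImp_pointwise himp X)⟩
  exact fun d hd => H (N d) d le_rfl hd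

/-- Fixation lemma: an implicate of `S` missing a variable of `σ ∈ S` is
an implicate of `S \ {σ}`. -/
theorem implicate_drop (I : ∀ X, D X) (S : Set (MvClause V D))
    (hfix : locallyFixated I S) (σ : MvClause V D) (hσ : σ ∈ S)
    (c : MvClause V D) (hc : ∀ w, cnfSat S w → c.csat w)
    (X0 : V) (hX0σ : σ.lits X0 ≠ (∅ : Set (D X0))) (hX0c : c.lits X0 = (∅ : Set (D X0))) :
    ∀ w, cnfSat (S \ {σ}) w → c.csat w := by
  intro w hw
  classical
  set w' : ∀ X, D X := Function.update w X0 (I X0) with hw'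
  have hw'X0 : w' X0 = I X0 := Function.update_self _ _ _
  have hw'ne : ∀ Y, Y ≠ X0 → w' Y = w Y := fun Y hY => Function.update_of_ne hY _ _
  have hSw' : cnfSat S w' := by
    intro d hd
    by_cases hdσ : d = σ
    · exact ⟨X0, by rw [hw'X0, hdσ]; exact hfix σ hσ X0 hX0σ⟩
    · obtain ⟨Y, hY⟩ := hw d ⟨hd, hdσ⟩
      by_cases hYX0 : Y = X0
      · subst hYX0
        refine ⟨Y, ?_⟩
        rw [hw'X0]
        exact hfix d hd Y (fun h => (h ▸ hY : w Y ∈ (∅ : Set (D Y))))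
      · exact ⟨Y, by rw [hw'ne Y hYX0]; exact hY⟩
  obtain ⟨Y, hY⟩ := hc w' hSw'
  have hYX0 : Y ≠ X0 := by
    intro h; subst h; rw [hX0c] at hY; exact hY
  exact ⟨Y, by rw [← hw'ne Y hYX0]; exact hY⟩

end Helpers

/-- incremental variable-minimality pruning: if the CNF `S` is
locally fixated on instance `I` and contains clauses `σ`, `σ'` with
`vars(σ') ⊊ vars(σ)`, then the variable-minimal prime implicates of `S` are
exactly those of `S ∖ {σ}`. -/
theorem var_min_prime_implicates_prune {V : Type} {D : V → Type}
    [Fintype V] [∀ X, Fintype (D X)]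
    (I : ∀ X, D X) (S : Set (MvClause V D)) (hfix : locallyFixated I S)
    (σ σ' : MvClause V D) (hσ : σ ∈ S) (hσ' : σ' ∈ S)
    (hvars : MvClause.vars σ' ⊂ MvClause.vars σ) :
    ∀ c : MvClause V D,
      varMinPrimeImplicate S c ↔ varMinPrimeImplicate (S \ {σ}) c := by
  -- basic facts
  have hmono : ∀ w, cnfSat S w → cnfSat (S \ {σ}) w := fun w h d hd => h d hd.1
  have hσ'ne : σ' ≠ σ := fun h => (h ▸ hvars).ne rfl
  have hσ'mem : σ' ∈ S \ {σ} := ⟨hσ', hσ'ne⟩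
  have hσ'impS : ∀ w, cnfSat S w → σ'.csat w := fun w h => h σ' hσ'
  have hσ'impS' : ∀ w, cnfSat (S \ {σ}) w → σ'.csat w := fun w h => h σ' hσ'mem
  -- prime implicates of S and S \ {σ} below σ'
  obtain ⟨c₀, hc₀prime, hc₀sub⟩ := exists_prime_below (cnfSat S) σ' hσ'impS
  obtain ⟨c₁, hc₁prime, hc₁sub⟩ := exists_prime_below (cnfSat (S \ {σ})) σ' hσ'impS'
  have hc₀vars : MvClause.vars c₀ ⊆ MvClause.vars σ' := vars_mono hc₀sub
  have hc₁vars : MvClause.vars c₁ ⊆ MvClause.vars σ' := vars_mono hc₁sub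
  -- the drop lemma, packaged
  have drop : ∀ d : MvClause V D, (∀ w, cnfSat S w → d.csat w) →
      ¬ MvClause.vars σ ⊆ MvClause.vars d →
      ∀ w, cnfSat (S \ {σ}) w → d.csat w := by
    intro d hd hns
    obtain ⟨X0, hX0σ, hX0d⟩ := Set.not_subset.mp hns
    have hX0σ' : σ.lits X0 ≠ (∅ : Set (D X0)) := hX0σ
    have hX0d' : d.lits X0 = (∅ : Set (D X0)) := not_not.mp hX0d
    exact implicate_drop I S hfix σ hσ d hd X0 hX0σ' hX0d'
  intro c
  constructor
  · rintro ⟨hprime, hmin⟩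
    -- c is an implicate of S \ {σ}
    have hnsub : ¬ MvClause.vars σ ⊆ MvClause.vars c := by
      intro hss
      exact hmin ⟨c₀, hc₀prime,
        lt_of_le_of_lt hc₀vars (lt_of_lt_of_le hvars hss)⟩
    have hcimp : ∀ w, cnfSat (S \ {σ}) w → c.csat w := drop c hprime.1 hnsub
    refine ⟨⟨hcimp, ?_⟩, ?_⟩
    · intro σ'' hσ'' himp
      exact hprime.2 σ'' (fun w hw => hσ'' w (hmono w hw)) himp
    · rintro ⟨c', hc'prime, hc'vars⟩
      obtain ⟨c'', hc''prime, hc''sub⟩ :=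
        exists_prime_below (cnfSat S) c' (fun w hw => hc'prime.1 w (hmono w hw))
      exact hmin ⟨c'', hc''prime, lt_of_le_of_lt (vars_mono hc''sub) hc'vars⟩
  · rintro ⟨hprime, hmin⟩
    have hcimpS : ∀ w, cnfSat S w → c.csat w := fun w hw => hprime.1 w (hmono w hw)
    refine ⟨⟨hcimpS, ?_⟩, ?_⟩
    · intro σ'' hσ'' himp
      have hnsub : ¬ MvClause.vars σ ⊆ MvClause.vars σ'' := by
        intro hss
        have hσ''c : MvClause.vars σ'' ⊆ MvClause.vars c :=
          vars_mono (clauseImp_pointwise himp)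
        exact hmin ⟨c₁, hc₁prime,
          lt_of_le_of_lt hc₁vars (lt_of_lt_of_le hvars (hss.trans hσ''c))⟩
      exact hprime.2 σ'' (drop σ'' hσ'' hnsub) himp
    · rintro ⟨c', hc'prime, hc'vars⟩
      by_cases hss : MvClause.vars σ ⊆ MvClause.vars c'
      · exact hmin ⟨c₁, hc₁prime,
          lt_of_le_of_lt hc₁vars (lt_of_lt_of_le hvars (hss.trans hc'vars.le))⟩
      · have hc'imp : ∀ w, cnfSat (S \ {σ}) w → c'.csat w := drop c' hc'prime.1 hss
        obtain ⟨c'', hc''prime, hc''sub⟩ :=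
          exists_prime_below (cnfSat (S \ {σ})) c' hc'imp
        exact hmin ⟨c'', hc''prime, lt_of_le_of_lt (vars_mono hc''sub) hc'vars⟩
end
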